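/- arXiv:2103.05634 — 2 statements merged into one kernel-verified Lean document; each statement's English description precedes it below -/
import Mathlib

section
/- Let c : ℕ≥1 → ℝ≥0 be a nonnegative function and for each integer k ≥ 0 define ψ_k(y) = (1/k!) ∑_{m ≤ y} c(m) (log(y/m))^k for real y > 0. Then for every integer k ≥ 1, every real 0 < λ ≤ 1, and every real y ≥ 1, one has ψ_k(y) − ψ_k(e^{−λ} y) ≤ λ · ψ_{k−1}(y) ≤ ψ_k(e^{λ} y) − ψ_k(y). -/
/-- For `c : ℕ → ℝ` and `k : ℕ`, the weighted Chebyshev-type sum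
`ψ_k(y) = (1/k!) ∑_{1 ≤ m ≤ y} c(m) (log (y/m))^k`. -/
noncomputable def psi (c : ℕ → ℝ) (k : ℕ) (y : ℝ) : ℝ :=
  (1 / (Nat.factorial k : ℝ)) * ∑ m ∈ Finset.Icc 1 ⌊y⌋₊, c m * (Real.log (y / m)) ^ k

lemma pow_bounds_aux (a lam : ℝ) (ha : 0 ≤ a) (hl : 0 ≤ lam) (j : ℕ) :
    ((j : ℝ) + 1) * lam * a ^ j ≤ (a + lam) ^ (j + 1) - a ^ (j + 1) ∧
    (a + lam) ^ (j + 1) - a ^ (j + 1) ≤ ((j : ℝ) + 1) * lam * (a + lam) ^ j := by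
  have hab : a ≤ a + lam := le_add_of_nonneg_right hl
  have hb : 0 ≤ a + lam := ha.trans hab
  have h := geom_sum₂_mul (a + lam) a (j + 1)
  simp only [Nat.add_sub_cancel, add_sub_cancel_left] at h
  have hlo : ((j : ℝ) + 1) * a ^ j ≤ ∑ i ∈ Finset.range (j + 1), (a + lam) ^ i * a ^ (j - i) := by
    have key : ∀ i ∈ Finset.range (j + 1), a ^ j ≤ (a + lam) ^ i * a ^ (j - i) := by
      intro i hi
      have hi' : i < j + 1 := Finset.mem_range.mp hi
      have h1 : a ^ j = a ^ i * a ^ (j - i) := by rw [← pow_add]; congr 1; omega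
      rw [h1]
      exact mul_le_mul_of_nonneg_right (pow_le_pow_left₀ ha hab i) (pow_nonneg ha _)
    calc ((j : ℝ) + 1) * a ^ j = ∑ _i ∈ Finset.range (j + 1), a ^ j := by
          rw [Finset.sum_const, Finset.card_range]; push_cast; ring
      _ ≤ _ := Finset.sum_le_sum key
  have hhi : (∑ i ∈ Finset.range (j + 1), (a + lam) ^ i * a ^ (j - i)) ≤
      ((j : ℝ) + 1) * (a + lam) ^ j := by
    have key : ∀ i ∈ Finset.range (j + 1), (a + lam) ^ i * a ^ (j - i) ≤ (a + lam) ^ j := by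
      intro i hi
      have hi' : i < j + 1 := Finset.mem_range.mp hi
      have h1 : (a + lam) ^ j = (a + lam) ^ i * (a + lam) ^ (j - i) := by
        rw [← pow_add]; congr 1; omega
      rw [h1]
      exact mul_le_mul_of_nonneg_left (pow_le_pow_left₀ ha hab _) (pow_nonneg hb _)
    calc (∑ i ∈ Finset.range (j + 1), (a + lam) ^ i * a ^ (j - i))
        ≤ ∑ _i ∈ Finset.range (j + 1), (a + lam) ^ j := Finset.sum_le_sum key
      _ = ((j : ℝ) + 1) * (a + lam) ^ j := by
          rw [Finset.sum_const, Finset.card_range]; push_cast; ring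
  constructor
  · rw [← h]
    calc ((j : ℝ) + 1) * lam * a ^ j = (((j : ℝ) + 1) * a ^ j) * lam := by ring
      _ ≤ _ := mul_le_mul_of_nonneg_right hlo hl
  · rw [← h]
    calc (∑ i ∈ Finset.range (j + 1), (a + lam) ^ i * a ^ (j - i)) * lam
        ≤ (((j : ℝ) + 1) * (a + lam) ^ j) * lam := mul_le_mul_of_nonneg_right hhi hl
      _ = ((j : ℝ) + 1) * lam * (a + lam) ^ j := by ring

/-- Let `c : ℕ → ℝ` be nonnegative.  For every `k ≥ 1`, every `0 < λ ≤ 1` and every `y ≥ 1`,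
`ψ_k(y) − ψ_k(e^{−λ} y) ≤ λ ψ_{k−1}(y) ≤ ψ_k(e^{λ} y) − ψ_k(y)`. -/
theorem psi_sandwich (c : ℕ → ℝ) (hc : ∀ m, 0 ≤ c m) (k : ℕ) (hk : 1 ≤ k)
    (lam : ℝ) (hlam0 : 0 < lam) (hlam1 : lam ≤ 1) (y : ℝ) (hy : 1 ≤ y) :
    psi c k y - psi c k (Real.exp (-lam) * y) ≤ lam * psi c (k - 1) y ∧
    lam * psi c (k - 1) y ≤ psi c k (Real.exp lam * y) - psi c k y := by
  obtain ⟨j, rfl⟩ : ∃ j, k = j + 1 := ⟨k - 1, by omega⟩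
  have hy0 : (0 : ℝ) < y := lt_of_lt_of_le one_pos hy
  have hexpneg : Real.exp (-lam) * y ≤ y := by
    have h1 : Real.exp (-lam) ≤ 1 := Real.exp_le_one_iff.mpr (by linarith)
    nlinarith [Real.exp_pos (-lam)]
  have hexppos : y ≤ Real.exp lam * y := by
    have h1 : 1 ≤ Real.exp lam := Real.one_le_exp (by linarith)
    nlinarith
  set A := Finset.Icc 1 ⌊Real.exp (-lam) * y⌋₊ with hAdef
  set B := Finset.Icc 1 ⌊y⌋₊ with hBdef
  set C := Finset.Icc 1 ⌊Real.exp lam * y⌋₊ with hCdef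
  have hAB : A ⊆ B := Finset.Icc_subset_Icc_right (Nat.floor_le_floor hexpneg)
  have hBC : B ⊆ C := Finset.Icc_subset_Icc_right (Nat.floor_le_floor hexppos)
  have hmpos : ∀ m ∈ C, (0 : ℝ) < (m : ℝ) := by
    intro m hm
    have h1 : 1 ≤ m := (Finset.mem_Icc.mp hm).1
    exact_mod_cast Nat.lt_of_lt_of_le Nat.zero_lt_one h1
  have hmB : ∀ m ∈ B, (m : ℝ) ≤ y := by
    intro m hm
    exact le_trans (Nat.cast_le.mpr (Finset.mem_Icc.mp hm).2) (Nat.floor_le hy0.le)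
  have hmA : ∀ m ∈ A, (m : ℝ) ≤ Real.exp (-lam) * y := by
    intro m hm
    exact le_trans (Nat.cast_le.mpr (Finset.mem_Icc.mp hm).2)
      (Nat.floor_le (by positivity))
  have hmC : ∀ m ∈ C, (m : ℝ) ≤ Real.exp lam * y := by
    intro m hm
    exact le_trans (Nat.cast_le.mpr (Finset.mem_Icc.mp hm).2)
      (Nat.floor_le (by positivity))
  have hLnn : ∀ m ∈ B, 0 ≤ Real.log (y / m) := by
    intro m hm
    exact Real.log_nonneg ((one_le_div (hmpos m (hBC hm))).mpr (hmB m hm))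
  -- log identities
  have hlogP : ∀ m : ℕ, (0 : ℝ) < (m : ℝ) →
      Real.log (Real.exp lam * y / m) = Real.log (y / m) + lam := by
    intro m hm
    rw [mul_div_assoc, Real.log_mul (Real.exp_ne_zero _) (by positivity), Real.log_exp]
    ring
  have hlogN : ∀ m : ℕ, (0 : ℝ) < (m : ℝ) →
      Real.log (y / m) = Real.log (Real.exp (-lam) * y / m) + lam := by
    intro m hm
    rw [mul_div_assoc, Real.log_mul (Real.exp_ne_zero _) (by positivity), Real.log_exp]
    ring
  -- abbreviations for sums
  set S : ℝ := ∑ m ∈ B, c m * Real.log (y / m) ^ (j + 1) with hSdef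
  set S1 : ℝ := ∑ m ∈ A, c m * Real.log (Real.exp (-lam) * y / m) ^ (j + 1) with hS1def
  set S2 : ℝ := ∑ m ∈ C, c m * Real.log (Real.exp lam * y / m) ^ (j + 1) with hS2def
  set T : ℝ := ∑ m ∈ B, c m * Real.log (y / m) ^ j with hTdef
  -- the middle quantity as a sum over B
  have hmid : ∑ m ∈ B, c m * (((j : ℝ) + 1) * lam * Real.log (y / m) ^ j)
      = ((j : ℝ) + 1) * lam * T := by
    rw [hTdef, Finset.mul_sum]
    exact Finset.sum_congr rfl (fun m _ => by ring)
  -- Part 1 core inequality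
  have h1 : S - S1 ≤ ((j : ℝ) + 1) * lam * T := by
    have hsplit : S = (∑ m ∈ B \ A, c m * Real.log (y / m) ^ (j + 1))
        + ∑ m ∈ A, c m * Real.log (y / m) ^ (j + 1) :=
      (Finset.sum_sdiff hAB).symm
    have hsplit' : ∑ m ∈ B, c m * (((j : ℝ) + 1) * lam * Real.log (y / m) ^ j)
        = (∑ m ∈ B \ A, c m * (((j : ℝ) + 1) * lam * Real.log (y / m) ^ j))
        + ∑ m ∈ A, c m * (((j : ℝ) + 1) * lam * Real.log (y / m) ^ j) :=
      (Finset.sum_sdiff hAB).symm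
    have hA1 : ∀ m ∈ A,
        c m * Real.log (y / m) ^ (j + 1)
          - c m * Real.log (Real.exp (-lam) * y / m) ^ (j + 1)
        ≤ c m * (((j : ℝ) + 1) * lam * Real.log (y / m) ^ j) := by
      intro m hm
      have hmp := hmpos m (hBC (hAB hm))
      have ha : 0 ≤ Real.log (Real.exp (-lam) * y / m) :=
        Real.log_nonneg ((one_le_div hmp).mpr (hmA m hm))
      have heq := hlogN m hmp
      obtain ⟨-, hub⟩ :=
        pow_bounds_aux (Real.log (Real.exp (-lam) * y / m)) lam ha hlam0.le j
      rw [heq]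
      have := mul_le_mul_of_nonneg_left hub (hc m)
      linarith
    have hBA : ∀ m ∈ B \ A,
        c m * Real.log (y / m) ^ (j + 1)
        ≤ c m * (((j : ℝ) + 1) * lam * Real.log (y / m) ^ j) := by
      intro m hm
      obtain ⟨hmB', hmA'⟩ := Finset.mem_sdiff.mp hm
      have hmp := hmpos m (hBC hmB')
      have h1m : 1 ≤ m := (Finset.mem_Icc.mp hmB').1
      have hflt : ⌊Real.exp (-lam) * y⌋₊ < m := by
        by_contra hcon
        push_neg at hcon
        exact hmA' (Finset.mem_Icc.mpr ⟨h1m, hcon⟩)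
      have hlt : Real.exp (-lam) * y < (m : ℝ) :=
        (Nat.floor_lt (by positivity)).mp hflt
      have hmul : Real.exp lam * Real.exp (-lam) = 1 := by
        rw [← Real.exp_add]; simp
      have hylt : y < Real.exp lam * m := by nlinarith [Real.exp_pos lam]
      have hLle : Real.log (y / m) ≤ lam := by
        rw [Real.log_le_iff_le_exp (by positivity)]
        rw [div_le_iff₀ hmp]
        nlinarith
      have hLnn' : 0 ≤ Real.log (y / m) := hLnn m hmB'
      have hpow : Real.log (y / m) ^ (j + 1) ≤ lam * Real.log (y / m) ^ j := by
        rw [pow_succ]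
        calc Real.log (y / m) ^ j * Real.log (y / m)
            ≤ Real.log (y / m) ^ j * lam :=
              mul_le_mul_of_nonneg_left hLle (pow_nonneg hLnn' j)
          _ = lam * Real.log (y / m) ^ j := by ring
      have hstep : lam * Real.log (y / m) ^ j
          ≤ ((j : ℝ) + 1) * lam * Real.log (y / m) ^ j := by
        have hj0 : (0 : ℝ) ≤ (j : ℝ) := Nat.cast_nonneg j
        nlinarith [mul_nonneg hj0 (mul_nonneg hlam0.le (pow_nonneg hLnn' j))]
      have := mul_le_mul_of_nonneg_left (hpow.trans hstep) (hc m)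
      linarith
    have hs1 : ∑ m ∈ A, (c m * Real.log (y / m) ^ (j + 1)
          - c m * Real.log (Real.exp (-lam) * y / m) ^ (j + 1))
        ≤ ∑ m ∈ A, c m * (((j : ℝ) + 1) * lam * Real.log (y / m) ^ j) :=
      Finset.sum_le_sum hA1
    rw [Finset.sum_sub_distrib] at hs1
    have hs2 := Finset.sum_le_sum hBA
    rw [← hmid, hsplit, hsplit']
    linarith
  -- Part 2 core inequality
  have h2 : ((j : ℝ) + 1) * lam * T ≤ S2 - S := by
    have hB2 : ∀ m ∈ B,
        c m * (((j : ℝ) + 1) * lam * Real.log (y / m) ^ j)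
        ≤ c m * (Real.log (Real.exp lam * y / m) ^ (j + 1)
            - Real.log (y / m) ^ (j + 1)) := by
      intro m hm
      have hmp := hmpos m (hBC hm)
      have ha := hLnn m hm
      obtain ⟨hlb, -⟩ := pow_bounds_aux (Real.log (y / m)) lam ha hlam0.le j
      rw [hlogP m hmp]
      exact mul_le_mul_of_nonneg_left hlb (hc m)
    have hs1 := Finset.sum_le_sum hB2
    have hs1' : ∑ m ∈ B, c m * (Real.log (Real.exp lam * y / m) ^ (j + 1)
          - Real.log (y / m) ^ (j + 1))
        = (∑ m ∈ B, c m * Real.log (Real.exp lam * y / m) ^ (j + 1)) - S := by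
      rw [hSdef, ← Finset.sum_sub_distrib]
      exact Finset.sum_congr rfl (fun m _ => by ring)
    have hsub : (∑ m ∈ B, c m * Real.log (Real.exp lam * y / m) ^ (j + 1)) ≤ S2 := by
      refine Finset.sum_le_sum_of_subset_of_nonneg hBC ?_
      intro m hm _
      have hmp := hmpos m hm
      have hlg : 0 ≤ Real.log (Real.exp lam * y / m) :=
        Real.log_nonneg ((one_le_div hmp).mpr (hmC m hm))
      exact mul_nonneg (hc m) (pow_nonneg hlg _)
    rw [← hmid]
    linarith
  -- conclude
  have hfacpos : (0 : ℝ) < (Nat.factorial (j + 1) : ℝ) := by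
    exact_mod_cast Nat.factorial_pos (j + 1)
  have hfacjpos : (0 : ℝ) < (Nat.factorial j : ℝ) := by
    exact_mod_cast Nat.factorial_pos j
  have hfac : (Nat.factorial (j + 1) : ℝ) = ((j : ℝ) + 1) * (Nat.factorial j : ℝ) := by
    rw [Nat.factorial_succ]; push_cast; ring
  have heq : lam * psi c (j + 1 - 1) y
      = (((j : ℝ) + 1) * lam * T) / (Nat.factorial (j + 1) : ℝ) := by
    simp only [Nat.add_sub_cancel]
    rw [psi, hfac]
    field_simp
    ring
  have hpsiy : psi c (j + 1) y = S / (Nat.factorial (j + 1) : ℝ) := by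
    rw [psi]; ring
  have hpsineg : psi c (j + 1) (Real.exp (-lam) * y)
      = S1 / (Nat.factorial (j + 1) : ℝ) := by
    rw [psi]; ring
  have hpsipos : psi c (j + 1) (Real.exp lam * y)
      = S2 / (Nat.factorial (j + 1) : ℝ) := by
    rw [psi]; ring
  constructor
  · rw [heq, hpsiy, hpsineg, div_sub_div_same]
    exact div_le_div_of_nonneg_right h1 hfacpos.le |>.trans_eq rfl
  · rw [heq, hpsipos, hpsiy, div_sub_div_same]
    exact div_le_div_of_nonneg_right h2 hfacpos.le |>.trans_eq rfl
end

section
/- There is an absolute constant C > 0 with the following property. Let c : ℕ≥1 → ℝ≥0 be a nonnegative function, let κ ≥ 0 be real, and for each integer k ≥ 0 define ψ_k(y) = (1/k!) ∑_{m ≤ y} c(m) (log(y/m))^k and r_k(y) = ψ_k(y) − κ·y for real y > 0. Then for every integer k ≥ 1, every real 0 < λ ≤ 1, and every real x ≥ 1, sup_{1 ≤ y ≤ x} |r_{k−1}(y)| ≤ C · ( λ·κ·x + λ^{−1} · sup_{1 ≤ y ≤ e·x} |r_k(y)| ). -/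
/-!
For `0 < z ≤ y` put `L = log (y / z)`, so that `log (y / m) = log (z / m) + L`. Since
`(a + L)^(k+1) - a^(k+1)` lies between `(k+1) L a^k` and `(k+1) L (a + L)^k` for `a, L ≥ 0`,
and `0 ≤ log (y / m) ≤ L` for the extra terms `z < m ≤ y`, one gets the discrete mean-value
sandwich `L ψ_k(z) ≤ ψ_{k+1}(y) - ψ_{k+1}(z) ≤ L ψ_k(y)`.
Apply it to `(z, y) = (y, y e^λ)` and `(y e^{-λ}, y)` and write `ψ_{k+1}(t) = κ t + r_{k+1}(t)`
with `|r_{k+1}| ≤ R` on `[1, e x]`: as `e^{±λ} = 1 ± λ + O(λ²)`, this gives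
`λ |r_k(y)| ≤ 2R + λ² κ x`. If instead `y e^{-λ} < 1`, then `y < e < 3`, and
`r_k(y) ≥ -κ y ≥ -3R` because `r_{k+1}(1) = -κ` forces `κ ≤ R`.
-/

open Finset Real

theorem sum_range_pow_mul_pow_sub {α : Type*} [CommSemiring α] (a : α) (n : ℕ) :
    ∑ i ∈ range (n + 1), a ^ i * a ^ (n - i) = (n + 1) * a ^ n := by
  rw [sum_congr rfl fun i hi => pow_mul_pow_sub a (Nat.lt_succ_iff.mp (mem_range.mp hi))]
  simp

section PowSub
variable {α : Type*} [CommRing α] [LinearOrder α] [IsStrictOrderedRing α] {a b : α}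

theorem le_pow_succ_sub_pow_succ (ha : 0 ≤ a) (hab : a ≤ b) (n : ℕ) :
    (n + 1) * a ^ n * (b - a) ≤ b ^ (n + 1) - a ^ (n + 1) := by
  rw [← sum_range_pow_mul_pow_sub, ← geom_sum₂_mul, Nat.add_sub_cancel]
  have : 0 ≤ b - a := sub_nonneg.mpr hab
  gcongr

theorem pow_succ_sub_pow_succ_le (ha : 0 ≤ a) (hab : a ≤ b) (n : ℕ) :
    b ^ (n + 1) - a ^ (n + 1) ≤ (n + 1) * b ^ n * (b - a) := by
  rw [← sum_range_pow_mul_pow_sub, ← geom_sum₂_mul, Nat.add_sub_cancel]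
  have : 0 ≤ b - a := sub_nonneg.mpr hab
  gcongr
  exact pow_nonneg (ha.trans hab) _

end PowSub

theorem one_le_cast_and_cast_le_of_mem_Icc_floor {y : ℝ} {m : ℕ} (hm : m ∈ Icc 1 ⌊y⌋₊) :
    1 ≤ (m : ℝ) ∧ (m : ℝ) ≤ y := by
  obtain ⟨h1, h2⟩ := mem_Icc.mp hm
  exact ⟨by exact_mod_cast h1, (Nat.le_floor_iff' (by omega)).mp h2⟩

theorem log_div_cast_nonneg_of_mem_Icc_floor {y : ℝ} {m : ℕ} (hm : m ∈ Icc 1 ⌊y⌋₊) :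
    0 ≤ log (y / m) := by
  obtain ⟨h1, h2⟩ := one_le_cast_and_cast_le_of_mem_Icc_floor hm
  exact log_nonneg ((one_le_div (by linarith)).mpr h2)

theorem log_div_eq_log_div_add_log_div {y z m : ℝ} (hy : 0 < y) (hz : 0 < z) (hm : 0 < m) :
    log (y / m) = log (z / m) + log (y / z) := by
  rw [← log_mul (by positivity) (by positivity)]
  congr 1
  field_simp

theorem exp_le_one_add_add_sq {x : ℝ} (hx : |x| ≤ 1) : exp x ≤ 1 + x + x ^ 2 := by
  linarith [(abs_le.mp (abs_exp_sub_one_sub_id_le hx)).2]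

noncomputable def psiSum (c : ℕ → ℝ) (k : ℕ) (y : ℝ) : ℝ :=
  ∑ m ∈ Icc 1 ⌊y⌋₊, c m * log (y / m) ^ k

theorem psi_eq_psiSum_div (c : ℕ → ℝ) (k : ℕ) (y : ℝ) :
    psi c k y = psiSum c k y / k.factorial :=
  one_div_mul_eq_div _ _

theorem psi_succ_one (c : ℕ → ℝ) (k : ℕ) : psi c (k + 1) 1 = 0 := by
  simp [psi]

section NonnegCoeff
variable {c : ℕ → ℝ}

theorem psiSum_nonneg (hc : ∀ m, 0 ≤ c m) (k : ℕ) (y : ℝ) : 0 ≤ psiSum c k y :=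
  sum_nonneg fun m hm => mul_nonneg (hc m) (pow_nonneg (log_div_cast_nonneg_of_mem_Icc_floor hm) k)

theorem psiSum_monotone (hc : ∀ m, 0 ≤ c m) (k : ℕ) : Monotone (psiSum c k) := by
  intro y y' hyy'
  calc psiSum c k y ≤ ∑ m ∈ Icc 1 ⌊y⌋₊, c m * log (y' / m) ^ k := by
        refine sum_le_sum fun m hm => ?_
        obtain ⟨hm1, hmy⟩ := one_le_cast_and_cast_le_of_mem_Icc_floor hm
        gcongr
        · exact hc m
        · exact log_div_cast_nonneg_of_mem_Icc_floor hm
        · exact div_pos (by linarith) (by linarith)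
    _ ≤ psiSum c k y' := by
        refine sum_le_sum_of_subset_of_nonneg (Icc_subset_Icc_right (Nat.floor_mono hyy')) ?_
        intro m hm _
        exact mul_nonneg (hc m) (pow_nonneg (log_div_cast_nonneg_of_mem_Icc_floor hm) k)

theorem psiSum_succ_add_mul_psiSum_le (hc : ∀ m, 0 ≤ c m) (k : ℕ) {y z : ℝ} (hz : 0 < z)
    (hzy : z ≤ y) :
    psiSum c (k + 1) z + (k + 1) * log (y / z) * psiSum c k z ≤ psiSum c (k + 1) y := by
  have hL : 0 ≤ log (y / z) := log_nonneg ((one_le_div hz).mpr hzy)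
  calc psiSum c (k + 1) z + (k + 1) * log (y / z) * psiSum c k z
      = ∑ m ∈ Icc 1 ⌊z⌋₊,
          c m * (log (z / m) ^ (k + 1) + (k + 1) * log (z / m) ^ k * log (y / z)) := by
        simp only [psiSum, mul_sum, ← sum_add_distrib]
        exact sum_congr rfl fun m _ => by ring
    _ ≤ ∑ m ∈ Icc 1 ⌊z⌋₊, c m * log (y / m) ^ (k + 1) := by
        refine sum_le_sum fun m hm => mul_le_mul_of_nonneg_left ?_ (hc m)
        have hm1 := (one_le_cast_and_cast_le_of_mem_Icc_floor hm).1
        rw [log_div_eq_log_div_add_log_div (hz.trans_le hzy) hz (by linarith : (0 : ℝ) < m)]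
        have := le_pow_succ_sub_pow_succ (log_div_cast_nonneg_of_mem_Icc_floor hm)
          (le_add_of_nonneg_right hL) k
        rw [add_sub_cancel_left] at this
        linarith
    _ ≤ psiSum c (k + 1) y := by
        refine sum_le_sum_of_subset_of_nonneg (Icc_subset_Icc_right (Nat.floor_mono hzy)) ?_
        intro m hm _
        exact mul_nonneg (hc m) (pow_nonneg (log_div_cast_nonneg_of_mem_Icc_floor hm) _)

theorem psiSum_succ_le_add_mul_psiSum (hc : ∀ m, 0 ≤ c m) (k : ℕ) {y z : ℝ} (hz : 0 < z)
    (hzy : z ≤ y) :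
    psiSum c (k + 1) y ≤ psiSum c (k + 1) z + (k + 1) * log (y / z) * psiSum c k y := by
  have hy : 0 < y := hz.trans_le hzy
  have hL : 0 ≤ log (y / z) := log_nonneg ((one_le_div hz).mpr hzy)
  have hsub : Icc 1 ⌊z⌋₊ ⊆ Icc 1 ⌊y⌋₊ := Icc_subset_Icc_right (Nat.floor_mono hzy)
  set g : ℕ → ℝ := fun m => c m * ((k + 1) * log (y / m) ^ k * log (y / z))
  have hg : (k + 1) * log (y / z) * psiSum c k y = ∑ m ∈ Icc 1 ⌊y⌋₊, g m := by
    simp only [g, psiSum, mul_sum]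
    exact sum_congr rfl fun m _ => by ring
  have hfar : ∀ m ∈ Icc 1 ⌊y⌋₊ \ Icc 1 ⌊z⌋₊,
      c m * log (y / m) ^ (k + 1) ≤ g m := by
    intro m hm
    obtain ⟨hmy, hmz⟩ := mem_sdiff.mp hm
    have hm1 := (one_le_cast_and_cast_le_of_mem_Icc_floor hmy).1
    have hzm : z ≤ m := by
      by_contra! h
      exact hmz (mem_Icc.mpr ⟨(mem_Icc.mp hmy).1, Nat.le_floor h.le⟩)
    have hb := log_div_cast_nonneg_of_mem_Icc_floor hmy
    have hbL : log (y / m) ≤ log (y / z) :=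
      log_le_log (by positivity) (div_le_div_of_nonneg_left hy.le hz hzm)
    refine mul_le_mul_of_nonneg_left ?_ (hc m)
    calc log (y / m) ^ (k + 1) = log (y / m) ^ k * log (y / m) := pow_succ _ _
      _ ≤ 1 * log (y / m) ^ k * log (y / z) := by rw [one_mul]; gcongr
      _ ≤ (k + 1) * log (y / m) ^ k * log (y / z) := by gcongr; linarith
  have hnear : ∀ m ∈ Icc 1 ⌊z⌋₊,
      c m * log (y / m) ^ (k + 1) ≤ c m * log (z / m) ^ (k + 1) + g m := by
    intro m hm
    have hm0 : (0 : ℝ) < m := by linarith [(one_le_cast_and_cast_le_of_mem_Icc_floor hm).1]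
    have := pow_succ_sub_pow_succ_le (log_div_cast_nonneg_of_mem_Icc_floor hm)
      (le_add_of_nonneg_right hL) k
    rw [add_sub_cancel_left] at this
    simp only [g, log_div_eq_log_div_add_log_div hy hz hm0, ← mul_add]
    exact mul_le_mul_of_nonneg_left (by linarith) (hc m)
  calc psiSum c (k + 1) y
      = ∑ m ∈ Icc 1 ⌊y⌋₊ \ Icc 1 ⌊z⌋₊, c m * log (y / m) ^ (k + 1)
          + ∑ m ∈ Icc 1 ⌊z⌋₊, c m * log (y / m) ^ (k + 1) := (sum_sdiff hsub).symm
    _ ≤ ∑ m ∈ Icc 1 ⌊y⌋₊ \ Icc 1 ⌊z⌋₊, g m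
          + ∑ m ∈ Icc 1 ⌊z⌋₊, (c m * log (z / m) ^ (k + 1) + g m) :=
        add_le_add (sum_le_sum hfar) (sum_le_sum hnear)
    _ = psiSum c (k + 1) z + (k + 1) * log (y / z) * psiSum c k y := by
        rw [sum_add_distrib, hg, ← sum_sdiff hsub, psiSum]
        ring

theorem psi_succ_add_log_div_mul_psi_le (hc : ∀ m, 0 ≤ c m) (k : ℕ) {y z : ℝ} (hz : 0 < z)
    (hzy : z ≤ y) :
    psi c (k + 1) z + log (y / z) * psi c k z ≤ psi c (k + 1) y := by
  have := psiSum_succ_add_mul_psiSum_le hc k hz hzy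
  rw [psi_eq_psiSum_div, psi_eq_psiSum_div, psi_eq_psiSum_div, Nat.factorial_succ, Nat.cast_mul,
    Nat.cast_succ]
  field_simp
  linarith

theorem psi_succ_le_add_log_div_mul_psi (hc : ∀ m, 0 ≤ c m) (k : ℕ) {y z : ℝ} (hz : 0 < z)
    (hzy : z ≤ y) :
    psi c (k + 1) y ≤ psi c (k + 1) z + log (y / z) * psi c k y := by
  have := psiSum_succ_le_add_mul_psiSum hc k hz hzy
  rw [psi_eq_psiSum_div, psi_eq_psiSum_div, psi_eq_psiSum_div, Nat.factorial_succ, Nat.cast_mul,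
    Nat.cast_succ]
  field_simp
  linarith

theorem psi_nonneg (hc : ∀ m, 0 ≤ c m) (k : ℕ) (y : ℝ) : 0 ≤ psi c k y := by
  rw [psi_eq_psiSum_div]
  exact div_nonneg (psiSum_nonneg hc k y) (Nat.cast_nonneg _)

theorem psi_monotone (hc : ∀ m, 0 ≤ c m) (k : ℕ) : Monotone (psi c k) := fun y y' hyy' => by
  rw [psi_eq_psiSum_div, psi_eq_psiSum_div]
  gcongr
  exact psiSum_monotone hc k hyy'

theorem bddAbove_abs_psi_sub_mul (hc : ∀ m, 0 ≤ c m) {κ : ℝ} (hκ : 0 ≤ κ) (k : ℕ)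
    (X : ℝ) :
    BddAbove ((fun y => |psi c k y - κ * y|) '' Set.Icc 1 X) := by
  refine ⟨psi c k X + κ * X, ?_⟩
  rintro _ ⟨y, ⟨hy1, hyX⟩, rfl⟩
  have hψ := psi_monotone hc k hyX
  have hψ0 := psi_nonneg hc k y
  have hκy : κ * y ≤ κ * X := mul_le_mul_of_nonneg_left hyX hκ
  have hκy0 : 0 ≤ κ * y := mul_nonneg hκ (by linarith)
  rw [abs_le]
  constructor <;> linarith

variable {κ : ℝ} {k : ℕ} {lam R X y : ℝ}

theorem mul_psi_sub_mul_le (hc : ∀ m, 0 ≤ c m) (hκ : 0 ≤ κ) (hlam0 : 0 ≤ lam)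
    (hlam1 : lam ≤ 1) (hR : ∀ t ∈ Set.Icc 1 X, |psi c (k + 1) t - κ * t| ≤ R)
    (hy : 1 ≤ y) (hyX : y * exp lam ≤ X) :
    lam * (psi c k y - κ * y) ≤ 2 * R + lam ^ 2 * (κ * y) := by
  have hy0 : 0 < y := by linarith
  have hyy : y ≤ y * exp lam := le_mul_of_one_le_right hy0.le (one_le_exp hlam0)
  have hψ := psi_succ_add_log_div_mul_psi_le hc k hy0 hyy
  rw [mul_div_cancel_left₀ _ hy0.ne', log_exp] at hψ
  have hfar := (abs_le.mp (hR _ ⟨hy.trans hyy, hyX⟩)).2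
  have hnear := (abs_le.mp (hR _ ⟨hy, hyy.trans hyX⟩)).1
  have hexp : κ * y * exp lam ≤ κ * y * (1 + lam + lam ^ 2) :=
    mul_le_mul_of_nonneg_left (exp_le_one_add_add_sq (by rw [abs_le]; constructor <;> linarith))
      (by positivity)
  linarith

theorem neg_le_mul_psi_sub_mul (hc : ∀ m, 0 ≤ c m) (hκ : 0 ≤ κ) (hlam0 : 0 ≤ lam)
    (hlam1 : lam ≤ 1) (hR : ∀ t ∈ Set.Icc 1 X, |psi c (k + 1) t - κ * t| ≤ R)
    (hy : 1 ≤ y * exp (-lam)) (hyX : y ≤ X) :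
    -(2 * R + lam ^ 2 * (κ * y)) ≤ lam * (psi c k y - κ * y) := by
  have hexp1 : exp (-lam) ≤ 1 := exp_le_one_iff.mpr (by linarith)
  have hy0 : 0 < y := by nlinarith [exp_pos (-lam)]
  have hzy : y * exp (-lam) ≤ y := mul_le_of_le_one_right hy0.le hexp1
  have hψ := psi_succ_le_add_log_div_mul_psi hc k (by positivity) hzy
  rw [div_mul_cancel_left₀ hy0.ne', log_inv, log_exp, neg_neg] at hψ
  have hfar := (abs_le.mp (hR _ ⟨hy, hzy.trans hyX⟩)).2
  have hnear := (abs_le.mp (hR _ ⟨hy.trans hzy, hyX⟩)).1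
  have hexp : κ * y * exp (-lam) ≤ κ * y * (1 + -lam + (-lam) ^ 2) :=
    mul_le_mul_of_nonneg_left (exp_le_one_add_add_sq (by rw [abs_le]; constructor <;> linarith))
      (by positivity)
  linarith

theorem abs_psi_sub_mul_le (hc : ∀ m, 0 ≤ c m) (hκ : 0 ≤ κ) (hlam0 : 0 < lam)
    (hlam1 : lam ≤ 1) {x : ℝ}
    (hR : ∀ t ∈ Set.Icc 1 (exp 1 * x), |psi c (k + 1) t - κ * t| ≤ R) (hκR : κ ≤ R)
    (hy : y ∈ Set.Icc 1 x) :
    |psi c k y - κ * y| ≤ 3 * (lam * κ * x + lam⁻¹ * R) := by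
  obtain ⟨hy1, hyx⟩ := hy
  have hx0 : 0 ≤ x := by linarith
  have hR0 : 0 ≤ R := hκ.trans hκR
  have hκy : lam ^ 2 * (κ * y) ≤ lam ^ 2 * (κ * x) := by gcongr
  have hκx : 0 ≤ lam ^ 2 * (κ * x) := by positivity
  suffices h : |lam * (psi c k y - κ * y)| ≤ 3 * (lam ^ 2 * (κ * x) + R) by
    rw [abs_mul, abs_of_pos hlam0] at h
    refine le_of_mul_le_mul_left (h.trans_eq ?_) hlam0
    field_simp
  rw [abs_le]
  constructor
  · by_cases hy_large : 1 ≤ y * exp (-lam)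
    · have := neg_le_mul_psi_sub_mul hc hκ hlam0.le hlam1 hR hy_large
        (hyx.trans (le_mul_of_one_le_left (by linarith) (one_le_exp zero_le_one)))
      linarith
    · rw [exp_neg, ← div_eq_mul_inv, not_le, div_lt_one (exp_pos _)] at hy_large
      have hy3 : κ * y ≤ κ * 3 := by
        gcongr
        linarith [exp_le_exp.mpr hlam1, exp_one_lt_three]
      have hψ : 0 ≤ lam * psi c k y := mul_nonneg hlam0.le (psi_nonneg hc k y)
      have hlam_κy : lam * (κ * y) ≤ κ * y := mul_le_of_le_one_left (by positivity) hlam1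
      linarith
  · have := mul_psi_sub_mul_le hc hκ hlam0.le hlam1 hR hy1
      (by rw [mul_comm (exp 1)]; gcongr)
    linarith

end NonnegCoeff

/-- There is an absolute constant `C > 0` such that, with `r_k(y) = ψ_k(y) − κ·y` for a
nonnegative `c : ℕ → ℝ` and real `κ ≥ 0`, for every `k ≥ 1`, `0 < λ ≤ 1` and `x ≥ 1`,
`sup_{1 ≤ y ≤ x} |r_{k−1}(y)| ≤ C (λ κ x + λ⁻¹ sup_{1 ≤ y ≤ e x} |r_k(y)|)`. -/
theorem remainder_downward_induction :
    ∃ C : ℝ, 0 < C ∧ ∀ (c : ℕ → ℝ), (∀ m, 0 ≤ c m) → ∀ κ : ℝ, 0 ≤ κ →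
      ∀ k : ℕ, 1 ≤ k → ∀ lam : ℝ, 0 < lam → lam ≤ 1 → ∀ x : ℝ, 1 ≤ x →
        sSup ((fun y : ℝ => |psi c (k - 1) y - κ * y|) '' Set.Icc 1 x) ≤
          C * (lam * κ * x +
            lam⁻¹ * sSup ((fun y : ℝ => |psi c k y - κ * y|) '' Set.Icc 1 (Real.exp 1 * x))) := by
  refine ⟨3, by norm_num, fun c hc κ hκ k hk lam hlam0 hlam1 x hx => ?_⟩
  obtain ⟨k, rfl⟩ := Nat.exists_eq_add_of_le' hk
  rw [Nat.add_sub_cancel]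
  set R := sSup ((fun y : ℝ => |psi c (k + 1) y - κ * y|) '' Set.Icc 1 (exp 1 * x))
  have hR : ∀ t ∈ Set.Icc 1 (exp 1 * x), |psi c (k + 1) t - κ * t| ≤ R := fun t ht =>
    le_csSup (bddAbove_abs_psi_sub_mul hc hκ _ _) (Set.mem_image_of_mem _ ht)
  have hκR : κ ≤ R := by
    have h1 := hR 1 ⟨le_rfl, one_le_mul_of_one_le_of_one_le (one_le_exp zero_le_one) hx⟩
    rwa [psi_succ_one, zero_sub, mul_one, abs_neg, abs_of_nonneg hκ] at h1
  refine csSup_le ((Set.nonempty_Icc.mpr hx).image _) ?_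
  rintro _ ⟨y, hy, rfl⟩
  exact abs_psi_sub_mul_le hc hκ hlam0 hlam1 hR hκR hy
end
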